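/- The subspace K(M_n) of bounded counting functions on the free monoid M_n is spanned by the extension relations {l_w, r_w : w ∈ M_n}, where l_w = p_w - Σ_{s∈S} p_{sw} and r_w = p_w - Σ_{s∈S} p_{ws}. -/

import Mathlib

/-!
The left extension relations give `p_w ≡ Σ_{|x| = k} p_{xw}`, so modulo the relations every
counting function is congruent to a homogeneous one `G = Σ_{|y| = K+1} a_y p_y`, which is
bounded when the original function is. The occurrences of a word of length `K + 1` in
`v ++ p ++ u` with `|p| = K` are those in `v ++ p` together with those in `p ++ u`. Pumping
`p ++ (u ++ p)^m` then shows that a bounded `G` vanishes on every word `p ++ u ++ p`, and this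
forces `a_y = h (y minus its last letter) - h (y minus its first letter)` with `h x = G (x ++ z)`
for a fixed `z` of length `K`. Summing by parts, `G = Σ_{|x| = K} h x • (l_x - r_x)`.
Conversely, `l_w` and `r_w` are the indicators of `w ≠ ε` being a prefix, resp. a suffix.
-/

open List Finset

/-- Number of occurrences of `w` as a contiguous subword of `v`. -/
def occ {α : Type*} [DecidableEq α] (w v : List α) : ℕ :=
  ((List.range (v.length + 1 - w.length)).filter (fun i => decide (w <+: v.drop i))).length

/-- Elementary counting function, with the convention `p_ε(v) = |v|`. -/
def cnt {α : Type*} [DecidableEq α] (w v : List α) : ℚ :=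
  if w = [] then v.length else occ w v

section Occurrences

variable {α : Type*} [DecidableEq α]

theorem occ_of_length_lt {w v : List α} (h : v.length < w.length) : occ w v = 0 := by
  simp [occ, show v.length + 1 - w.length = 0 by omega]

theorem occ_cons (w : List α) (x : α) (v : List α) :
    occ w (x :: v) = occ w v + if w <+: x :: v then 1 else 0 := by
  by_cases hw : w.length ≤ v.length + 1
  · have hm : (x :: v).length + 1 - w.length = (v.length + 1 - w.length) + 1 := by
      simp only [length_cons]; omega
    have htail : ((fun i => decide (w <+: (x :: v).drop i)) ∘ Nat.succ)
        = fun i => decide (w <+: v.drop i) := rfl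
    rw [occ, hm, List.range_succ_eq_map, List.filter_cons, List.filter_map, htail]
    by_cases hp : w <+: x :: v <;> simp [hp, occ, Nat.add_comm]
  · have hp : ¬ w <+: x :: v := fun hp => by have := hp.length_le; simp at this; omega
    simp [occ_of_length_lt (show (x :: v).length < w.length by simp; omega),
      occ_of_length_lt (show v.length < w.length by omega), hp]

theorem occ_eq_ite_of_length_eq {w v : List α} (h : w.length = v.length) :
    occ w v = if w = v then 1 else 0 := by
  by_cases hwv : w = v
  · simp [occ, hwv]
  · have hp : ¬ w <+: v := fun hp => hwv (hp.eq_of_length h)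
    simp [occ, h, hwv, hp]

theorem occ_append_append_of_length_succ_eq {w p : List α} (hp : p.length + 1 = w.length)
    (v u : List α) : occ w (v ++ p ++ u) = occ w (v ++ p) + occ w (p ++ u) := by
  induction v with
  | nil => simp [occ_of_length_lt (show p.length < w.length by omega)]
  | cons x v ih =>
    have hpre : w <+: x :: (v ++ p ++ u) ↔ w <+: x :: (v ++ p) :=
      ⟨fun h => prefix_of_prefix_length_le h (by simp) (by simp; omega),
        fun h => by simpa using h.trans (prefix_append _ u)⟩
    simp only [cons_append, occ_cons, ih, hpre]
    omega

variable [Fintype α]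

theorem occ_eq_add_sum_occ_cons (w v : List α) :
    occ w v = (if w <+: v then 1 else 0) + ∑ s, occ (s :: w) v := by
  induction v with
  | nil => rcases w with _ | ⟨x, w⟩ <;> simp [occ]
  | cons x v ih =>
    have hfirst : (∑ s : α, if s :: w <+: x :: v then 1 else 0) = if w <+: v then 1 else 0 := by
      simp [cons_prefix_cons, ite_and]
    simp only [occ_cons, ih, Finset.sum_add_distrib, hfirst]
    omega

theorem sum_ite_append_singleton_prefix (w u : List α) :
    (∑ s : α, if w ++ [s] <+: u then 1 else 0) = if w <+: u ∧ w ≠ u then 1 else 0 := by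
  by_cases hp : w <+: u
  · obtain ⟨t, rfl⟩ := hp
    rcases t with _ | ⟨s₀, t⟩
    · simpa using fun s (h : w ++ [s] <+: w) => by simpa using h.length_le
    · simp [prefix_append_right_inj, cons_prefix_cons]
  · have : ∀ s : α, ¬ w ++ [s] <+: u := fun s h => hp ((prefix_append w [s]).trans h)
    simp [this, hp]

theorem occ_eq_add_sum_occ_append_singleton (w v : List α) :
    occ w v = (if w <:+ v then 1 else 0) + ∑ s, occ (w ++ [s]) v := by
  induction v with
  | nil => rcases w with _ | ⟨x, w⟩ <;> simp [occ]
  | cons x v ih =>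
    simp only [occ_cons, ih, Finset.sum_add_distrib, sum_ite_append_singleton_prefix]
    by_cases hw : w = x :: v
    · subst hw
      have : ¬ x :: v <:+ v := fun h => by have := h.length_le; simp at this
      simp [this, add_comm]
    · simp only [suffix_cons_iff, hw, false_or, ne_eq, not_false_eq_true, and_true]
      omega

end Occurrences

def boundedFunctions (X : Type*) : Submodule ℚ (X → ℚ) where
  carrier := {f | ∃ C, ∀ x, |f x| ≤ C}
  add_mem' := fun ⟨C, hC⟩ ⟨D, hD⟩ =>
    ⟨C + D, fun x => (abs_add_le _ _).trans (add_le_add (hC x) (hD x))⟩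
  zero_mem' := ⟨0, fun x => by simp⟩
  smul_mem' c f := fun ⟨C, hC⟩ =>
    ⟨|c| * C, fun x => by
      simpa only [Pi.smul_apply, smul_eq_mul, abs_mul] using
        mul_le_mul_of_nonneg_left (hC x) (abs_nonneg c)⟩

def OverlapAdditive {α : Type*} (K : ℕ) (G : List α → ℚ) : Prop :=
  ∀ v p u : List α, p.length = K → G (v ++ p ++ u) = G (v ++ p) + G (p ++ u)

namespace OverlapAdditive

variable {α : Type*} {K : ℕ} {G : List α → ℚ}

theorem apply_eq_zero (hG : OverlapAdditive K G) {p : List α} (hp : p.length = K) :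
    G p = 0 := by
  have := hG [] p [] hp
  simp only [nil_append, append_nil] at this
  linarith

theorem apply_append_flatten_replicate (hG : OverlapAdditive K G) {p : List α}
    (hp : p.length = K) (u : List α) (m : ℕ) :
    G (p ++ (replicate m (u ++ p)).flatten) = m * G (p ++ u ++ p) := by
  induction m with
  | zero => simp [hG.apply_eq_zero hp]
  | succ m ih =>
    have hsplit := hG (p ++ u) p (replicate m (u ++ p)).flatten hp
    simp only [append_assoc] at hsplit ih ⊢
    rw [replicate_succ, flatten_cons, append_assoc, hsplit, ih]
    push_cast
    ring

theorem apply_append_append_self (hG : OverlapAdditive K G)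
    (hb : G ∈ boundedFunctions (List α)) {p : List α} (hp : p.length = K) (u : List α) :
    G (p ++ u ++ p) = 0 := by
  obtain ⟨C, hC⟩ := hb
  by_contra hc
  obtain ⟨m, hm⟩ := exists_nat_gt (C / |G (p ++ u ++ p)|)
  have hbound := hC (p ++ (replicate m (u ++ p)).flatten)
  rw [hG.apply_append_flatten_replicate hp, abs_mul, Nat.abs_cast] at hbound
  rw [div_lt_iff₀ (abs_pos.mpr hc)] at hm
  linarith

theorem apply_eq_neg_apply_append (hG : OverlapAdditive K G)
    (hb : G ∈ boundedFunctions (List α)) {p r u s : List α} (hp : p.length = K)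
    (hs : s.length = K) (h : p ++ r = u ++ s) : G (p ++ r) = -G (s ++ p) := by
  have hsplit := hG s p r hp
  rw [show s ++ p ++ r = s ++ u ++ s by rw [append_assoc, h, append_assoc],
    hG.apply_append_append_self hb hs] at hsplit
  linarith

theorem apply_eq_sub (hG : OverlapAdditive K G)
    (hb : G ∈ boundedFunctions (List α)) {y z : List α} (hy : y.length = K + 1)
    (hz : z.length = K) :
    G y = G (y.take K ++ z) - G (y.drop 1 ++ z) := by
  set p := y.take K
  set s := y.drop 1
  have hp : p.length = K := by simp [p, hy]
  have hs : s.length = K := by simp [s, hy]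
  have hy_rot : G y = -G (s ++ p) := by
    simpa only [p, take_append_drop] using
      hG.apply_eq_neg_apply_append hb (r := y.drop K) (u := y.take 1) hp hs
        (by simp only [p, s, take_append_drop])
  have hpzs : G (p ++ z ++ s) = -G (s ++ p) := by
    simpa only [append_assoc] using
      hG.apply_eq_neg_apply_append hb (r := z ++ s) (u := p ++ z) hp hs (append_assoc _ _ _).symm
  have hzs : G (z ++ s) = -G (s ++ z) := hG.apply_eq_neg_apply_append hb hz hs rfl
  linarith [hG p z s hz]

end OverlapAdditive

section Words

variable {α : Type*} [Fintype α]

variable (α) in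
def words (k : ℕ) : Finset (List α) :=
  (univ : Finset (Fin k → α)).map ⟨List.ofFn, List.ofFn_injective⟩

@[simp]
theorem mem_words {k : ℕ} {l : List α} : l ∈ words α k ↔ l.length = k := by
  refine ⟨fun h => ?_, fun h => ?_⟩
  · obtain ⟨f, -, rfl⟩ := Finset.mem_map.mp h
    exact length_ofFn
  · subst h
    exact Finset.mem_map.mpr ⟨fun i : Fin l.length => l[i], mem_univ _, ofFn_getElem⟩

theorem sum_words_succ_cons {M : Type*} [AddCommMonoid M] (k : ℕ) (F : List α → M) :
    ∑ y ∈ words α (k + 1), F y = ∑ s, ∑ x ∈ words α k, F (s :: x) := by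
  rw [← Finset.sum_product']
  refine (Finset.sum_bij (fun q _ => q.1 :: q.2) (fun q hq => ?_) (fun q _ q' _ h => ?_)
    (fun y hy => ?_) fun _ _ => rfl).symm
  · simpa using (Finset.mem_product.mp hq).2
  · simpa [Prod.ext_iff] using h
  · obtain _ | ⟨s, x⟩ := y
    · simp at hy
    · exact ⟨(s, x), by simpa using hy, rfl⟩

theorem sum_words_succ_append_singleton {M : Type*} [AddCommMonoid M] (k : ℕ)
    (F : List α → M) :
    ∑ y ∈ words α (k + 1), F y = ∑ s, ∑ x ∈ words α k, F (x ++ [s]) := by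
  rw [← Finset.sum_product']
  refine (Finset.sum_bij (fun q _ => q.2 ++ [q.1]) (fun q hq => ?_) (fun q _ q' _ h => ?_)
    (fun y hy => ?_) fun _ _ => rfl).symm
  · simpa using (Finset.mem_product.mp hq).2
  · obtain ⟨h₂, h₁⟩ := append_inj' h rfl
    exact Prod.ext (by simpa using h₁) h₂
  · obtain rfl | ⟨x, s, rfl⟩ := eq_nil_or_concat' y
    · simp at hy
    · exact ⟨(s, x), by simpa using hy, rfl⟩

end Words

section ExtensionRelations

variable {α : Type*} [Fintype α] [DecidableEq α]

def leftExtRel (w : List α) : List α → ℚ := cnt w - ∑ s, cnt (s :: w)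

def rightExtRel (w : List α) : List α → ℚ := cnt w - ∑ s, cnt (w ++ [s])

variable (α) in
def extRelSpan : Submodule ℚ (List α → ℚ) :=
  Submodule.span ℚ (Set.range leftExtRel ∪ Set.range rightExtRel)

theorem leftExtRel_apply (w v : List α) :
    leftExtRel w v = if w ≠ [] ∧ w <+: v then 1 else 0 := by
  have h := occ_eq_add_sum_occ_cons w v
  rcases eq_or_ne w [] with rfl | hw
  · have hlen : v.length = ∑ s, occ [s] v := by
      rw [show occ [] v = v.length + 1 by simp [occ]] at h
      simp only [nil_prefix, if_true] at h
      omega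
    simp only [leftExtRel, cnt, Pi.sub_apply, Finset.sum_apply]
    simp [hlen]
  · simp only [leftExtRel, cnt, Pi.sub_apply, Finset.sum_apply]
    simp only [hw, reduceCtorEq, if_false, h, ne_eq, not_false_eq_true, true_and]
    push_cast
    ring

theorem rightExtRel_apply (w v : List α) :
    rightExtRel w v = if w ≠ [] ∧ w <:+ v then 1 else 0 := by
  have h := occ_eq_add_sum_occ_append_singleton w v
  rcases eq_or_ne w [] with rfl | hw
  · have hlen : v.length = ∑ s, occ [s] v := by
      rw [show occ [] v = v.length + 1 by simp [occ]] at h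
      simp only [nil_suffix, if_true, nil_append] at h
      omega
    simp only [rightExtRel, cnt, Pi.sub_apply, Finset.sum_apply]
    simp [hlen]
  · simp only [rightExtRel, cnt, Pi.sub_apply, Finset.sum_apply]
    simp only [hw, append_eq_nil_iff, reduceCtorEq, and_false, if_false, h, ne_eq,
      not_false_eq_true, true_and]
    push_cast
    ring

theorem extRelSpan_le_boundedFunctions : extRelSpan α ≤ boundedFunctions (List α) := by
  refine Submodule.span_le.mpr ?_
  rintro _ (⟨w, rfl⟩ | ⟨w, rfl⟩) <;> refine ⟨1, fun v => ?_⟩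
  · rw [leftExtRel_apply]; split_ifs <;> simp
  · rw [rightExtRel_apply]; split_ifs <;> simp

theorem extRelSpan_le_span_cnt : extRelSpan α ≤ Submodule.span ℚ (Set.range cnt) := by
  refine Submodule.span_le.mpr ?_
  have hcnt (w : List α) : cnt w ∈ Submodule.span ℚ (Set.range cnt) :=
    Submodule.subset_span ⟨w, rfl⟩
  rintro _ (⟨w, rfl⟩ | ⟨w, rfl⟩)
  · exact sub_mem (hcnt w) (sum_mem fun s _ => hcnt (s :: w))
  · exact sub_mem (hcnt w) (sum_mem fun s _ => hcnt (w ++ [s]))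

theorem cnt_sub_sum_cnt_append_mem_extRelSpan (w : List α) (k : ℕ) :
    cnt w - ∑ x ∈ words α k, cnt (x ++ w) ∈ extRelSpan α := by
  induction k with
  | zero =>
    have : words α 0 = {[]} := by ext; simp
    simp [this]
  | succ k ih =>
    have hsum : ∑ y ∈ words α (k + 1), cnt (y ++ w)
        = ∑ x ∈ words α k, (cnt (x ++ w) - leftExtRel (x ++ w)) := by
      simp [sum_words_succ_cons, leftExtRel, Finset.sum_comm (s := univ)]
    rw [hsum, Finset.sum_sub_distrib, sub_sub_eq_add_sub, add_sub_right_comm]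
    exact add_mem ih (sum_mem fun x _ => Submodule.subset_span (Or.inl ⟨x ++ w, rfl⟩))

theorem exists_forall_mem_extRelSpan_sup_span_words {f : List α → ℚ}
    (hf : f ∈ Submodule.span ℚ (Set.range cnt)) :
    ∃ K₀, ∀ K ≥ K₀,
      f ∈ extRelSpan α ⊔ Submodule.span ℚ (cnt '' ↑(words α K)) := by
  induction hf using Submodule.span_induction with
  | mem g hg =>
    obtain ⟨w, rfl⟩ := hg
    refine ⟨w.length, fun K hK => Submodule.mem_sup.mpr
      ⟨_, cnt_sub_sum_cnt_append_mem_extRelSpan w (K - w.length), _,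
        sum_mem fun x hx => Submodule.subset_span ⟨x ++ w, ?_, rfl⟩, sub_add_cancel _ _⟩⟩
    simp only [mem_words, Finset.mem_coe, length_append] at hx ⊢
    omega
  | zero => exact ⟨0, fun _ _ => zero_mem _⟩
  | add g g' _ _ ih ih' =>
    obtain ⟨K₁, h₁⟩ := ih
    obtain ⟨K₂, h₂⟩ := ih'
    exact ⟨max K₁ K₂, fun K hK =>
      add_mem (h₁ K (le_of_max_le_left hK)) (h₂ K (le_of_max_le_right hK))⟩
  | smul c g _ ih =>
    obtain ⟨K₀, h⟩ := ih
    exact ⟨K₀, fun K hK => Submodule.smul_mem _ c (h K hK)⟩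

theorem overlapAdditive_sum_smul_cnt (K : ℕ) (a : List α → ℚ) :
    OverlapAdditive K (∑ y ∈ words α (K + 1), a y • cnt y) := by
  intro v p u hp
  simp only [Finset.sum_apply, Pi.smul_apply, smul_eq_mul, ← Finset.sum_add_distrib, ← mul_add]
  refine Finset.sum_congr rfl fun y hy => ?_
  have hy : y.length = K + 1 := mem_words.mp hy
  simp only [cnt, ne_nil_of_length_eq_add_one hy, if_false,
    occ_append_append_of_length_succ_eq (show p.length + 1 = y.length by omega)]
  push_cast
  ring

theorem sum_smul_cnt_apply_of_mem (a : List α → ℚ) {k : ℕ} {y : List α}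
    (hy : y ∈ words α (k + 1)) : (∑ x ∈ words α (k + 1), a x • cnt x) y = a y := by
  have hcnt : ∀ x ∈ words α (k + 1), a x * cnt x y = if x = y then a x else 0 := by
    intro x hx
    rw [mem_words] at hx hy
    simp only [cnt, ne_nil_of_length_eq_add_one hx, if_false,
      occ_eq_ite_of_length_eq (hx.trans hy.symm)]
    split_ifs <;> simp
  simp only [Finset.sum_apply, Pi.smul_apply, smul_eq_mul]
  rw [Finset.sum_congr rfl hcnt, Finset.sum_ite_eq', if_pos hy]

theorem sum_sub_smul_cnt_mem_extRelSpan (h : List α → ℚ) (K : ℕ) :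
    ∑ y ∈ words α (K + 1), (h (y.take K) - h (y.drop 1)) • cnt y ∈ extRelSpan α := by
  have hsnoc : ∑ y ∈ words α (K + 1), h (y.take K) • cnt y
      = ∑ x ∈ words α K, h x • ∑ s, cnt (x ++ [s]) := by
    rw [sum_words_succ_append_singleton, Finset.sum_comm]
    refine Finset.sum_congr rfl fun x hx => ?_
    simp only [Finset.smul_sum, take_left' (mem_words.mp hx)]
  have hcons : ∑ y ∈ words α (K + 1), h (y.drop 1) • cnt y
      = ∑ x ∈ words α K, h x • ∑ s, cnt (s :: x) := by
    rw [sum_words_succ_cons, Finset.sum_comm]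
    simp [Finset.smul_sum]
  have hrel : ∑ y ∈ words α (K + 1), (h (y.take K) - h (y.drop 1)) • cnt y
      = ∑ x ∈ words α K, h x • (leftExtRel x - rightExtRel x) := by
    simp only [sub_smul, Finset.sum_sub_distrib, hsnoc, hcons, leftExtRel, rightExtRel,
      smul_sub, sub_sub_sub_cancel_left]
  rw [hrel]
  exact sum_mem fun x _ => Submodule.smul_mem _ _
    (sub_mem (Submodule.subset_span (Or.inl ⟨x, rfl⟩))
      (Submodule.subset_span (Or.inr ⟨x, rfl⟩)))

theorem sum_smul_cnt_mem_extRelSpan [Nonempty α] {K : ℕ} {a : List α → ℚ}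
    (hb : ∑ y ∈ words α (K + 1), a y • cnt y ∈ boundedFunctions (List α)) :
    ∑ y ∈ words α (K + 1), a y • cnt y ∈ extRelSpan α := by
  set G := ∑ y ∈ words α (K + 1), a y • cnt y with hG
  obtain ⟨z, hz⟩ : ∃ z : List α, z.length = K :=
    ⟨replicate K (Classical.arbitrary α), length_replicate⟩
  have hcob :
      G = ∑ y ∈ words α (K + 1), (G (y.take K ++ z) - G (y.drop 1 ++ z)) • cnt y := by
    refine Finset.sum_congr rfl fun y hy => ?_
    rw [← (overlapAdditive_sum_smul_cnt K a).apply_eq_sub hb (mem_words.mp hy) hz,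
      sum_smul_cnt_apply_of_mem a hy]
  rw [hcob]
  exact sum_sub_smul_cnt_mem_extRelSpan (fun x => G (x ++ z)) K

theorem span_cnt_inf_boundedFunctions [Nonempty α] :
    Submodule.span ℚ (Set.range cnt) ⊓ boundedFunctions (List α) = extRelSpan α := by
  refine le_antisymm (fun f hf => ?_)
    (le_inf extRelSpan_le_span_cnt extRelSpan_le_boundedFunctions)
  obtain ⟨hf, hfb⟩ := Submodule.mem_inf.mp hf
  obtain ⟨K₀, hK₀⟩ := exists_forall_mem_extRelSpan_sup_span_words hf
  obtain ⟨r, hr, g, hg, rfl⟩ := Submodule.mem_sup.mp (hK₀ (K₀ + 1) le_self_add)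
  obtain ⟨a, rfl⟩ := (Submodule.mem_span_image_finset_iff_exists_fun' ℚ).mp hg
  have hgb := sub_mem hfb (extRelSpan_le_boundedFunctions hr)
  rw [add_sub_cancel_left] at hgb
  exact add_mem hr (sum_smul_cnt_mem_extRelSpan hgb)

end ExtensionRelations

/-- K(M_n), the subspace of bounded counting functions, is spanned by the extension
relations l_w = p_w - Σ_s p_{sw} and r_w = p_w - Σ_s p_{ws}. -/
theorem stmt_13 (n : ℕ) (hn : 2 ≤ n) (f : List (Fin n) → ℚ) :
    (f ∈ Submodule.span ℚ {g : List (Fin n) → ℚ | ∃ w : List (Fin n), g = cnt w} ∧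
      ∃ C : ℚ, ∀ v : List (Fin n), |f v| ≤ C) ↔
    f ∈ Submodule.span ℚ
      ({g : List (Fin n) → ℚ | ∃ w : List (Fin n),
          g = fun v => cnt w v - ∑ s : Fin n, cnt (s :: w) v} ∪
       {g : List (Fin n) → ℚ | ∃ w : List (Fin n),
          g = fun v => cnt w v - ∑ s : Fin n, cnt (w ++ [s]) v}) := by
  have : Nonempty (Fin n) := ⟨⟨0, by omega⟩⟩
  have hcnt : {g : List (Fin n) → ℚ | ∃ w, g = cnt w} = Set.range cnt := by
    ext g; simp [eq_comm]
  have hrel : {g : List (Fin n) → ℚ | ∃ w, g = fun v => cnt w v - ∑ s, cnt (s :: w) v} ∪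
      {g | ∃ w, g = fun v => cnt w v - ∑ s, cnt (w ++ [s]) v}
      = Set.range leftExtRel ∪ Set.range rightExtRel := by
    ext g; simp [leftExtRel, rightExtRel, eq_comm, funext_iff, Finset.sum_apply]
  rw [hcnt, hrel, ← extRelSpan, ← span_cnt_inf_boundedFunctions, Submodule.mem_inf]
  rfl
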